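/- Let $\sigma > 0$, $\omega > 0$, and $M = \sup_n|\gamma_n| < \infty$. If $\phi \in \ell^2(\mathbb{Z}^N)$ solves the stationary DNLS system $-(\mathbf{A}\phi)_n + \omega\phi_n = \gamma_n|\phi_n|^{2\sigma}\phi_n$ for all $n$, and $\|\phi\|_{\ell^2} < \frac{1}{2}\left(\frac{\omega}{M(2\sigma+1)}\right)^{1/2\sigma}$, then $\phi = 0$. That is, there is no nontrivial breather solution of energy less than $E_{\min} = \frac{1}{2}(\omega/(M(2\sigma+1)))^{1/2\sigma}$. -/
import Mathlib


/-- The discrete Laplacian on functions on `ℤ^N`. -/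
noncomputable def discLap (N : ℕ) (ψ : (Fin N → ℤ) → ℂ) : (Fin N → ℤ) → ℂ :=
  fun n => (∑ ν : Fin N, (ψ (n + Pi.single ν 1) + ψ (n - Pi.single ν 1))) - 2 * N * ψ n

/-- nonexistence of nontrivial breathers of small energy: if
`φ ∈ ℓ²(ℤ^N)` solves `-(Aφ)ₙ + ωφₙ = γₙ|φₙ|^{2σ}φₙ` and
`‖φ‖ < (1/2)(ω/(M(2σ+1)))^{1/(2σ)}`, then `φ = 0`. -/
theorem no_small_energy_breather (N : ℕ) (σ ω M : ℝ) (hσ : 0 < σ) (hω : 0 < ω)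
    (γ : (Fin N → ℤ) → ℝ) (hM : ∀ n, |γ n| ≤ M)
    (φ : lp (fun _ : Fin N → ℤ => ℂ) 2)
    (hsol : ∀ n, -(discLap N (fun m => (φ : ∀ _ : Fin N → ℤ, ℂ) m) n)
        + (ω : ℂ) * (φ : ∀ _ : Fin N → ℤ, ℂ) n
      = (γ n * ‖(φ : ∀ _ : Fin N → ℤ, ℂ) n‖ ^ (2 * σ) : ℝ) • (φ : ∀ _ : Fin N → ℤ, ℂ) n)
    (hsmall : ‖φ‖ < (1 / 2) * (ω / (M * (2 * σ + 1))) ^ (1 / (2 * σ))) :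
    φ = 0 := by
  set ψ : (Fin N → ℤ) → ℂ := (φ : ∀ _ : Fin N → ℤ, ℂ) with hψdef
  by_contra hne
  have hψne : ∃ n, ψ n ≠ 0 := by
    by_contra h
    push_neg at h
    exact hne (lp.ext (funext h))
  obtain ⟨n₁, hn₁⟩ := hψne
  have hε : 0 < ‖ψ n₁‖ := norm_pos_iff.mpr hn₁
  -- the set of points with large modulus is finite
  have hsum : Summable (fun n => ‖ψ n‖ ^ (2 : ℝ)) := by
    have := (lp.memℓp φ).summable (p := 2) (by norm_num)
    simpa using this
  have hfin : {n | ‖ψ n₁‖ ≤ ‖ψ n‖}.Finite := by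
    have hev : ∀ᶠ n in Filter.cofinite, ‖ψ n‖ ^ (2 : ℝ) < ‖ψ n₁‖ ^ (2 : ℝ) :=
      hsum.tendsto_cofinite_zero.eventually
        (gt_mem_nhds (Real.rpow_pos_of_pos hε 2))
    refine Set.Finite.subset hev (fun n hn => ?_)
    simp only [Set.mem_compl_iff, Set.mem_setOf_eq, not_lt]
    exact Real.rpow_le_rpow (norm_nonneg _) hn (by norm_num)
  -- choose a global maximizer
  obtain ⟨n₀, hn₀mem, hn₀max⟩ :=
    Set.exists_max_image _ (fun n => ‖ψ n‖) hfin ⟨n₁, by simp [Set.mem_setOf_eq]⟩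
  have hglob : ∀ m, ‖ψ m‖ ≤ ‖ψ n₀‖ := by
    intro m
    by_cases hm : ‖ψ n₁‖ ≤ ‖ψ m‖
    · exact hn₀max m hm
    · exact (not_le.mp hm).le.trans (hn₀mem : ‖ψ n₁‖ ≤ ‖ψ n₀‖)
  have ha : 0 < ‖ψ n₀‖ := lt_of_lt_of_le hε hn₀mem
  set a := ‖ψ n₀‖ with hadef
  set r : ℝ := γ n₀ * a ^ (2 * σ) with hrdef
  -- rewrite the equation at n₀
  have hS : ∑ ν : Fin N, (ψ (n₀ + Pi.single ν 1) + ψ (n₀ - Pi.single ν 1))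
      = ((2 * N + ω - r : ℝ) : ℂ) * ψ n₀ := by
    have h := hsol n₀
    simp only [discLap, Complex.real_smul] at h
    rw [hrdef, hadef]
    push_cast at h ⊢
    linear_combination -h
  -- bound the sum by 2N a
  have hbound : ‖∑ ν : Fin N, (ψ (n₀ + Pi.single ν 1) + ψ (n₀ - Pi.single ν 1))‖
      ≤ 2 * N * a := by
    calc ‖∑ ν : Fin N, (ψ (n₀ + Pi.single ν 1) + ψ (n₀ - Pi.single ν 1))‖
        ≤ ∑ ν : Fin N, ‖ψ (n₀ + Pi.single ν 1) + ψ (n₀ - Pi.single ν 1)‖ :=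
          norm_sum_le _ _
      _ ≤ ∑ _ν : Fin N, (2 * a) := by
          refine Finset.sum_le_sum fun ν _ => ?_
          calc ‖ψ (n₀ + Pi.single ν 1) + ψ (n₀ - Pi.single ν 1)‖
              ≤ ‖ψ (n₀ + Pi.single ν 1)‖ + ‖ψ (n₀ - Pi.single ν 1)‖ := norm_add_le _ _
            _ ≤ a + a := add_le_add (hglob _) (hglob _)
            _ = 2 * a := by ring
      _ = 2 * N * a := by simp [Finset.sum_const]; ring
  have habs : |2 * N + ω - r| * a ≤ 2 * N * a := by
    have : ‖((2 * N + ω - r : ℝ) : ℂ) * ψ n₀‖ = |2 * N + ω - r| * a := by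
      rw [norm_mul, Complex.norm_real, Real.norm_eq_abs]
    rw [← this, ← hS]
    exact hbound
  have habs' : |2 * N + ω - r| ≤ 2 * N := le_of_mul_le_mul_right (by linarith [habs]) ha
  have hωr : ω ≤ r := by
    have := le_trans (le_abs_self _) habs'
    linarith
  -- hence ω ≤ M a^(2σ)
  have hωM : ω ≤ M * a ^ (2 * σ) := by
    have h1 : r ≤ |γ n₀| * a ^ (2 * σ) := by
      have : γ n₀ ≤ |γ n₀| := le_abs_self _
      have hap : (0:ℝ) ≤ a ^ (2 * σ) := Real.rpow_nonneg ha.le _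
      calc r = γ n₀ * a ^ (2 * σ) := rfl
        _ ≤ |γ n₀| * a ^ (2 * σ) := by nlinarith
    have h2 : |γ n₀| * a ^ (2 * σ) ≤ M * a ^ (2 * σ) := by
      have hap : (0:ℝ) ≤ a ^ (2 * σ) := Real.rpow_nonneg ha.le _
      nlinarith [hM n₀]
    linarith
  -- numeric contradiction
  have hMpos : 0 < M := by
    by_contra hM0
    push_neg at hM0
    have hap : (0:ℝ) < a ^ (2 * σ) := Real.rpow_pos_of_pos ha _
    nlinarith
  have haφ : a ≤ ‖φ‖ := lp.norm_apply_le_norm (by norm_num) φ n₀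
  set t : ℝ := ω / (M * (2 * σ + 1)) with htdef
  have htpos : 0 < t := by positivity
  have hσ2 : (2 * σ) ≠ 0 := by positivity
  have hac : a < (1 / 2) * t ^ (1 / (2 * σ)) := lt_of_le_of_lt haφ hsmall
  have hcpos : 0 < (1 / 2) * t ^ (1 / (2 * σ)) := by positivity
  have h1 : a ^ (2 * σ) < ((1 / 2) * t ^ (1 / (2 * σ))) ^ (2 * σ) :=
    Real.rpow_lt_rpow ha.le hac (by positivity)
  have h2 : ((1 / 2) * t ^ (1 / (2 * σ))) ^ (2 * σ)
      = ((1:ℝ) / 2) ^ (2 * σ) * t := by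
    rw [Real.mul_rpow (by norm_num) (Real.rpow_nonneg htpos.le _),
      ← Real.rpow_mul htpos.le, one_div_mul_cancel hσ2, Real.rpow_one]
  have h3 : ((1:ℝ) / 2) ^ (2 * σ) < 1 :=
    Real.rpow_lt_one (by norm_num) (by norm_num) (by positivity)
  have h4 : t < ω / M := by
    rw [htdef]
    apply div_lt_div_of_pos_left hω (by positivity)
    nlinarith
  have h5 : a ^ (2 * σ) < ω / M := by
    have : ((1:ℝ) / 2) ^ (2 * σ) * t < t :=
      mul_lt_of_lt_one_left htpos h3
    calc a ^ (2 * σ) < ((1:ℝ)/2) ^ (2 * σ) * t := by rw [← h2]; exact h1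
      _ < t := this
      _ < ω / M := h4
  have h6 : a ^ (2 * σ) * M < ω := (lt_div_iff₀ hMpos).mp h5
  nlinarith
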